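/- arXiv:2011.07001 — 7 statements merged into one kernel-verified Lean document; each statement's English description precedes it below -/
import Mathlib

section
/- Let c₁, c₂, m ≥ 0 be real numbers and let k ≥ 1 be an integer. Suppose t : ℕ → ℝ satisfies t(1) ≤ c₁·m, and for every integer i with 2 ≤ i ≤ k there exists an integer r with 1 ≤ r ≤ i−1 such that t(i) ≤ c₂ · m · i · (Σ_{j=0}^{i} C(k, j)) + t(r) + t(i−r). Then t(k) ≤ c₁·m·k + c₂·m·k²·2^k. -/
/-- the runtime recurrence of the tree-matching algorithm. If
`t 1 ≤ c₁·m` and for every `2 ≤ i ≤ k` there is `1 ≤ r ≤ i−1` with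
`t i ≤ c₂·m·i·(Σ_{j=0}^{i} C(k,j)) + t r + t (i−r)`, then
`t k ≤ c₁·m·k + c₂·m·k²·2^k`. -/
theorem tree_matching_recurrence_bound
    (c₁ c₂ m : ℝ) (hc₁ : 0 ≤ c₁) (hc₂ : 0 ≤ c₂) (hm : 0 ≤ m)
    (k : ℕ) (hk : 1 ≤ k) (t : ℕ → ℝ)
    (hbase : t 1 ≤ c₁ * m)
    (hrec : ∀ i : ℕ, 2 ≤ i → i ≤ k → ∃ r : ℕ, 1 ≤ r ∧ r ≤ i - 1 ∧
      t i ≤ c₂ * m * (i : ℝ) * (∑ j ∈ Finset.range (i + 1), (Nat.choose k j : ℝ))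
              + t r + t (i - r)) :
    t k ≤ c₁ * m * (k : ℝ) + c₂ * m * (k : ℝ) ^ 2 * 2 ^ k := by
  have key : ∀ i : ℕ, 1 ≤ i → i ≤ k →
      t i ≤ c₁ * m * (i : ℝ) + c₂ * m * ((i : ℝ) - 1) * (k : ℝ) * 2 ^ k := by
    intro i
    induction i using Nat.strong_induction_on with
    | _ i ih =>
      intro h1 hik
      rcases eq_or_lt_of_le h1 with h1' | h1'
      · subst h1'
        have hb : (1:ℝ) ≤ (k:ℝ) := by exact_mod_cast hk
        have h2k : (0:ℝ) < (2:ℝ)^k := by positivity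
        have hcm : 0 ≤ c₂ * m := mul_nonneg hc₂ hm
        push_cast
        nlinarith [hbase]
      · have h2 : 2 ≤ i := h1'
        obtain ⟨r, hr1, hr2, hrec'⟩ := hrec i h2 hik
        have hrlt : r < i := lt_of_le_of_lt hr2 (by omega)
        have hirlt : i - r < i := by omega
        have hir1 : 1 ≤ i - r := by omega
        have hr_le : r ≤ k := le_trans hrlt.le hik
        have hir_le : i - r ≤ k := le_trans hirlt.le hik
        have htr := ih r hrlt hr1 hr_le
        have htir := ih (i - r) hirlt hir1 hir_le
        have hcast : ((i - r : ℕ) : ℝ) = (i : ℝ) - (r : ℝ) := by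
          have : r ≤ i := hrlt.le
          push_cast [this]; ring
        have hsum : (∑ j ∈ Finset.range (i + 1), (Nat.choose k j : ℝ)) ≤ 2 ^ k := by
          have hsub : Finset.range (i + 1) ⊆ Finset.range (k + 1) :=
            Finset.range_subset_range.mpr (by omega)
          calc (∑ j ∈ Finset.range (i + 1), (Nat.choose k j : ℝ))
              ≤ ∑ j ∈ Finset.range (k + 1), (Nat.choose k j : ℝ) :=
                Finset.sum_le_sum_of_subset_of_nonneg hsub
                  (fun j _ _ => by positivity)
            _ = 2 ^ k := by
                rw [← Nat.cast_sum]
                norm_cast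
                exact Nat.sum_range_choose k
        have hik' : (i : ℝ) ≤ (k : ℝ) := Nat.cast_le.mpr hik
        have hcm : 0 ≤ c₂ * m := mul_nonneg hc₂ hm
        have hi0 : (0:ℝ) ≤ (i : ℝ) := by positivity
        have hstep : c₂ * m * (i : ℝ) * (∑ j ∈ Finset.range (i + 1), (Nat.choose k j : ℝ))
            ≤ c₂ * m * (k : ℝ) * 2 ^ k := by
          have h2k : (0:ℝ) ≤ (2:ℝ)^k := by positivity
          have ha := mul_le_mul_of_nonneg_left hsum (mul_nonneg hcm hi0)
          have hb := mul_le_mul_of_nonneg_right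
            (mul_le_mul_of_nonneg_left hik' hcm) h2k
          nlinarith [ha, hb]
        calc t i ≤ c₂ * m * (i : ℝ) * (∑ j ∈ Finset.range (i + 1), (Nat.choose k j : ℝ))
              + t r + t (i - r) := hrec'
          _ ≤ c₂ * m * (k : ℝ) * 2 ^ k
              + (c₁ * m * (r : ℝ) + c₂ * m * ((r : ℝ) - 1) * (k : ℝ) * 2 ^ k)
              + (c₁ * m * (((i : ℝ) - (r : ℝ))) + c₂ * m * (((i : ℝ) - (r : ℝ)) - 1) * (k : ℝ) * 2 ^ k) := by
                rw [hcast] at htir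
                gcongr
          _ = c₁ * m * (i : ℝ) + c₂ * m * ((i : ℝ) - 1) * (k : ℝ) * 2 ^ k := by ring
  have := key k hk le_rfl
  have h2k : (0:ℝ) ≤ (2:ℝ)^k := by positivity
  have hcm : 0 ≤ c₂ * m := mul_nonneg hc₂ hm
  have hb : (1:ℝ) ≤ (k:ℝ) := by exact_mod_cast hk
  nlinarith [mul_nonneg hcm h2k]
end

section
/- Let c₁, c₂ ≥ 0 be reals, β ≥ 0 an integer, and g : ℕ → ℝ a nonnegative nondecreasing function. Suppose t : ℕ → ℝ is nonnegative, t(N) ≤ c₁ for all N ≤ 1, and for every N ≥ 2, t(N) ≤ N^(β+1) · t(⌊N/2⌋) + c₂ · N · g(N). Then for every N ≥ 1, t(N) ≤ N^((β+1)·(⌊log₂ N⌋ + 1)) · (c₁ + c₂ · N · g(N) · (⌊log₂ N⌋ + 1)). -/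
/-- the runtime recurrence of the template discovery algorithm. If `t` is
nonnegative, `t N ≤ c₁` for `N ≤ 1`, and `t N ≤ N^(β+1) · t(⌊N/2⌋) + c₂·N·g N` for `N ≥ 2`
(where `g` is nonnegative and nondecreasing), then for every `N ≥ 1`,
`t N ≤ N^((β+1)·(⌊log₂ N⌋+1)) · (c₁ + c₂·N·g N·(⌊log₂ N⌋+1))`. -/
theorem template_discovery_recurrence_bound
    (c₁ c₂ : ℝ) (hc₁ : 0 ≤ c₁) (hc₂ : 0 ≤ c₂) (β : ℕ)
    (g : ℕ → ℝ) (hg0 : ∀ n, 0 ≤ g n) (hgmono : Monotone g)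
    (t : ℕ → ℝ) (ht0 : ∀ n, 0 ≤ t n)
    (hbase : ∀ N : ℕ, N ≤ 1 → t N ≤ c₁)
    (hrec : ∀ N : ℕ, 2 ≤ N → t N ≤ (N : ℝ) ^ (β + 1) * t (N / 2) + c₂ * N * g N) :
    ∀ N : ℕ, 1 ≤ N →
      t N ≤ (N : ℝ) ^ ((β + 1) * (Nat.log 2 N + 1)) *
        (c₁ + c₂ * N * g N * (Nat.log 2 N + 1)) := by
  intro N
  induction N using Nat.strong_induction_on with
  | _ N ih =>
    intro hN
    rcases eq_or_lt_of_le hN with h1 | h2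
    · -- N = 1
      rw [← h1]
      simp only [Nat.log_one_right, Nat.cast_one, one_pow]
      have h1' := hbase 1 le_rfl
      have h2' := hg0 1
      push_cast
      nlinarith
    · -- 2 ≤ N
      have hN2 : 2 ≤ N := h2
      set L := Nat.log 2 N with hL
      have hLpos : 1 ≤ L := Nat.log_pos one_lt_two hN2
      have hlogd : Nat.log 2 (N / 2) + 1 = L := by
        have := Nat.log_div_base (b := 2) (n := N)
        omega
      have hhalf1 : 1 ≤ N / 2 := (Nat.one_le_div_iff (by norm_num)).mpr hN2
      have hhalflt : N / 2 < N := Nat.div_lt_self (by omega) (by norm_num)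
      have hIH := ih (N / 2) hhalflt hhalf1
      have hexp : (β + 1) * (Nat.log 2 (N / 2) + 1) = (β + 1) * L := by rw [hlogd]
      have hLcast : ((Nat.log 2 (N / 2) : ℝ) + 1) = (L : ℝ) := by exact_mod_cast hlogd
      rw [hexp, hLcast] at hIH
      have hhc : ((N / 2 : ℕ) : ℝ) ≤ (N : ℝ) := by exact_mod_cast Nat.div_le_self N 2
      have hhc0 : (0 : ℝ) ≤ ((N / 2 : ℕ) : ℝ) := Nat.cast_nonneg _
      have hgm : g (N / 2) ≤ g N := hgmono (Nat.div_le_self N 2)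
      have hIH2 : t (N / 2) ≤ (N : ℝ) ^ ((β + 1) * L) * (c₁ + c₂ * N * g N * L) := by
        refine hIH.trans ?_
        have hfac : 0 ≤ c₁ + c₂ * ↑(N / 2) * g (N / 2) * ↑L := by
          have : 0 ≤ c₂ * ↑(N / 2) * g (N / 2) * ↑L :=
            mul_nonneg (mul_nonneg (mul_nonneg hc₂ hhc0) (hg0 _)) (Nat.cast_nonneg _)
          linarith
        gcongr <;> first | exact hhc | exact hgm | exact hfac | exact hg0 _ | positivity
      have hNr : (1 : ℝ) ≤ (N : ℝ) := by exact_mod_cast hN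
      have hpow1 : (1 : ℝ) ≤ (N : ℝ) ^ ((β + 1) * (L + 1)) := one_le_pow₀ hNr
      have hX : 0 ≤ c₂ * N * g N :=
        mul_nonneg (mul_nonneg hc₂ (Nat.cast_nonneg _)) (hg0 _)
      have key : t N ≤ (N : ℝ) ^ ((β + 1) * (L + 1)) * (c₁ + c₂ * N * g N * L)
          + c₂ * N * g N := by
        calc t N ≤ (N : ℝ) ^ (β + 1) * t (N / 2) + c₂ * N * g N := hrec N hN2
          _ ≤ (N : ℝ) ^ (β + 1) * ((N : ℝ) ^ ((β + 1) * L) * (c₁ + c₂ * N * g N * L))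
              + c₂ * N * g N := by
            gcongr <;> first | exact hIH2 | positivity
          _ = (N : ℝ) ^ ((β + 1) * (L + 1)) * (c₁ + c₂ * N * g N * L)
              + c₂ * N * g N := by
            rw [← mul_assoc, ← pow_add]
            ring_nf
      refine key.trans ?_
      have : (β + 1) * (Nat.log 2 N + 1) = (β + 1) * (L + 1) := by rw [← hL]
      rw [this]
      push_cast
      nlinarith [hpow1, hX]
end

section
/- Let G be a connected simple graph on a finite vertex set V with at least two vertices, and let w assign a strictly positive real weight to every edge of G. Let S ⊆ V with S ≠ ∅ and S ≠ V be a minimum cut, i.e., the total weight of edges with exactly one endpoint in S is minimal among all such subsets. Then the subgraph of G induced by S is connected, and the subgraph induced by V \ S is connected. -/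
open Finset

lemma minCut_side_connected_aux
    {V : Type*} [Fintype V] [DecidableEq V] (G : SimpleGraph V) [DecidableRel G.Adj]
    (hconn : G.Connected)
    (w : V → V → ℝ)
    (hpos : ∀ u v, G.Adj u v → 0 < w u v)
    (S : Finset V) (hS1 : S ≠ ∅) (hS2 : S ≠ Finset.univ)
    (hmin : ∀ S' : Finset V, S' ≠ ∅ → S' ≠ Finset.univ →
      (∑ a ∈ S, ∑ b ∈ Sᶜ, if G.Adj a b then w a b else 0) ≤
        ∑ a ∈ S', ∑ b ∈ S'ᶜ, if G.Adj a b then w a b else 0) :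
    (G.induce (↑S : Set V)).Connected := by
  classical
  set f : V → V → ℝ := fun a b => if G.Adj a b then w a b else 0 with hf
  have fnonneg : ∀ a b, 0 ≤ f a b := by
    intro a b
    by_cases h : G.Adj a b <;> simp [hf, h]
    exact (hpos a b h).le
  rw [SimpleGraph.connected_iff]
  have hne : (↑S : Set V).Nonempty := by
    obtain ⟨x, hx⟩ := Finset.nonempty_iff_ne_empty.mpr hS1
    exact ⟨x, hx⟩
  refine ⟨?_, hne.to_subtype⟩
  by_contra hpre
  rw [SimpleGraph.Preconnected] at hpre
  push_neg at hpre
  obtain ⟨x, y, hxy⟩ := hpre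
  -- C : the set of vertices in S reachable from x within the induced graph
  set C : Finset V := S.filter
    (fun z => ∃ hz : z ∈ (↑S : Set V), (G.induce (↑S : Set V)).Reachable x ⟨z, hz⟩) with hC
  have hCsub : C ⊆ S := Finset.filter_subset _ _
  have hxC : (x : V) ∈ C := by
    rw [hC, Finset.mem_filter]
    exact ⟨x.2, x.2, by exact SimpleGraph.Reachable.refl _⟩
  have hyC : (y : V) ∉ C := by
    rw [hC, Finset.mem_filter]
    rintro ⟨-, hz, hr⟩
    exact hxy (by convert hr)
  -- closure: neighbours in S of vertices of C are in C
  have hclose : ∀ a ∈ C, ∀ b ∈ S, G.Adj a b → b ∈ C := by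
    intro a ha b hb hab
    rw [hC, Finset.mem_filter] at ha ⊢
    obtain ⟨haS, haS', hr⟩ := ha
    refine ⟨hb, hb, hr.trans (SimpleGraph.Adj.reachable ?_)⟩
    exact hab
  have hcross : ∀ a ∈ C, ∀ b ∈ S \ C, ¬ G.Adj a b := by
    intro a ha b hb hab
    rw [Finset.mem_sdiff] at hb
    exact hb.2 (hclose a ha b hb.1 hab)
  -- S' = S \ C is a valid cut
  set S' : Finset V := S \ C with hS'
  have hyS' : (y : V) ∈ S' := Finset.mem_sdiff.mpr ⟨y.2, hyC⟩
  have hS'1 : S' ≠ ∅ := by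
    intro h; rw [h] at hyS'; exact absurd hyS' (Finset.notMem_empty _)
  have hS'2 : S' ≠ Finset.univ := by
    intro h
    apply hS2
    apply Finset.eq_univ_of_forall
    intro v
    have : v ∈ S' := h ▸ Finset.mem_univ v
    exact (Finset.mem_sdiff.mp this).1
  -- crossing edge from C to Sᶜ
  obtain ⟨p⟩ := hconn (x : V) (y : V)
  obtain ⟨d, _, hd1, hd2⟩ := p.exists_boundary_dart (↑C : Set V)
    (by exact_mod_cast hxC) (by exact_mod_cast hyC)
  have hd1' : d.fst ∈ C := by exact_mod_cast hd1
  have hd2' : d.snd ∉ C := by exact_mod_cast hd2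
  have hdSc : d.snd ∈ Sᶜ := by
    rw [Finset.mem_compl]
    intro hmem
    exact hd2' (hclose d.fst hd1' d.snd hmem d.adj)
  -- compute the cut values
  have hsplit : ∑ a ∈ S, ∑ b ∈ Sᶜ, f a b
      = (∑ a ∈ S', ∑ b ∈ Sᶜ, f a b) + ∑ a ∈ C, ∑ b ∈ Sᶜ, f a b := by
    rw [hS', Finset.sum_sdiff hCsub]
  have hS'compl : S'ᶜ = Sᶜ ∪ C := by
    ext v
    simp only [hS', Finset.mem_compl, Finset.mem_sdiff, Finset.mem_union]
    tauto
  have hdisj : Disjoint (Sᶜ) C := by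
    rw [Finset.disjoint_left]
    intro a ha haC
    exact (Finset.mem_compl.mp ha) (hCsub haC)
  have hzero : ∀ a ∈ S', ∑ b ∈ C, f a b = 0 := by
    intro a ha
    apply Finset.sum_eq_zero
    intro b hb
    have : ¬ G.Adj b a := hcross b hb a ha
    have : ¬ G.Adj a b := fun h => this h.symm
    simp [hf, this]
  have hcutS' : ∑ a ∈ S', ∑ b ∈ S'ᶜ, f a b = ∑ a ∈ S', ∑ b ∈ Sᶜ, f a b := by
    rw [hS'compl]
    rw [Finset.sum_congr rfl (fun a ha => Finset.sum_union hdisj)]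
    rw [Finset.sum_add_distrib]
    rw [Finset.sum_congr rfl hzero]
    simp
  have hposC : 0 < ∑ a ∈ C, ∑ b ∈ Sᶜ, f a b := by
    apply Finset.sum_pos'
    · intro a _; exact Finset.sum_nonneg fun b _ => fnonneg a b
    · refine ⟨d.fst, hd1', Finset.sum_pos' (fun b _ => fnonneg _ _) ⟨d.snd, hdSc, ?_⟩⟩
      simp only [hf, d.adj, if_true]
      exact hpos _ _ d.adj
  have := hmin S' hS'1 hS'2
  rw [show (∑ a ∈ S', ∑ b ∈ S'ᶜ, if G.Adj a b then w a b else 0)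
      = ∑ a ∈ S', ∑ b ∈ S'ᶜ, f a b from rfl,
    show (∑ a ∈ S, ∑ b ∈ Sᶜ, if G.Adj a b then w a b else 0)
      = ∑ a ∈ S, ∑ b ∈ Sᶜ, f a b from rfl, hcutS', hsplit] at this
  linarith

/-- In a connected simple graph with strictly positive edge weights, both sides
of a minimum (global) cut induce connected subgraphs. -/
theorem minCut_sides_connected
    {V : Type*} [Fintype V] [DecidableEq V] (G : SimpleGraph V) [DecidableRel G.Adj]
    (hconn : G.Connected) (hcard : 2 ≤ Fintype.card V)
    (w : V → V → ℝ) (hsymm : ∀ u v, w u v = w v u)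
    (hpos : ∀ u v, G.Adj u v → 0 < w u v)
    (S : Finset V) (hS1 : S ≠ ∅) (hS2 : S ≠ Finset.univ)
    (hmin : ∀ S' : Finset V, S' ≠ ∅ → S' ≠ Finset.univ →
      (∑ a ∈ S, ∑ b ∈ Sᶜ, if G.Adj a b then w a b else 0) ≤
        ∑ a ∈ S', ∑ b ∈ S'ᶜ, if G.Adj a b then w a b else 0) :
    (G.induce (↑S : Set V)).Connected ∧ (G.induce (↑(Sᶜ) : Set V)).Connected := by
  classical
  have hsymm' : ∀ a b, (if G.Adj a b then w a b else 0) = (if G.Adj b a then w b a else 0) := by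
    intro a b
    by_cases h : G.Adj a b
    · simp [h, h.symm, hsymm a b]
    · have h' : ¬ G.Adj b a := fun hh => h hh.symm
      simp [h, h']
  have hcut_compl : ∀ T : Finset V,
      (∑ a ∈ Tᶜ, ∑ b ∈ Tᶜᶜ, if G.Adj a b then w a b else 0)
        = ∑ a ∈ T, ∑ b ∈ Tᶜ, if G.Adj a b then w a b else 0 := by
    intro T
    rw [compl_compl, Finset.sum_comm]
    exact Finset.sum_congr rfl fun a _ => Finset.sum_congr rfl fun b _ => hsymm' b a
  have hSc1 : Sᶜ ≠ ∅ := by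
    intro h
    apply hS2
    apply Finset.eq_univ_of_forall
    intro v
    by_contra hv
    have : v ∈ Sᶜ := Finset.mem_compl.mpr hv
    rw [h] at this
    exact Finset.notMem_empty _ this
  have hSc2 : Sᶜ ≠ Finset.univ := by
    intro h
    apply hS1
    rw [Finset.eq_empty_iff_forall_notMem]
    intro v hv
    have : v ∈ Sᶜ := h ▸ Finset.mem_univ v
    exact Finset.mem_compl.mp this hv
  have hminc : ∀ S' : Finset V, S' ≠ ∅ → S' ≠ Finset.univ →
      (∑ a ∈ Sᶜ, ∑ b ∈ Sᶜᶜ, if G.Adj a b then w a b else 0) ≤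
        ∑ a ∈ S', ∑ b ∈ S'ᶜ, if G.Adj a b then w a b else 0 := by
    intro S' h1 h2
    rw [hcut_compl S]
    exact hmin S' h1 h2
  exact ⟨minCut_side_connected_aux G hconn w hpos S hS1 hS2 hmin,
    minCut_side_connected_aux G hconn w hpos Sᶜ hSc1 hSc2 hminc⟩
end

section
/- Let (V, w, T, P) be a one-template parametric graph with s, t ∈ V \ T distinct. Then the minimum value of an s-t cut of the P-fold instantiation G_P equals the minimum value of an s-t cut of the reweighted graph G'. -/
open Finset

/-- Vertex set of the `P`-fold instantiation of a one-template parametric graph: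
vertices outside the template `T`, plus `P` copies of each template vertex. -/
abbrev Inst (V : Type) [Fintype V] [DecidableEq V] (T : Finset V) (P : ℕ) : Type :=
  {x : V // x ∉ T} ⊕ ({x : V // x ∈ T} × Fin P)

/-- Weight function `w_P` of the `P`-fold instantiation `G_P`. -/
noncomputable def instWeight {V : Type} [Fintype V] [DecidableEq V]
    (w : V → V → ℝ) (T : Finset V) (P : ℕ) :
    Inst V T P → Inst V T P → ℝ
  | Sum.inl x, Sum.inl y => w x.1 y.1
  | Sum.inl x, Sum.inr (v, _) => w x.1 v.1
  | Sum.inr (u, _), Sum.inl y => w u.1 y.1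
  | Sum.inr (u, i), Sum.inr (v, j) => if i = j then w u.1 v.1 else 0

/-- Weight function `w'` of the reweighted graph `G'` on vertex set `V`:
edges touching the template `T` are scaled by `P`. -/
noncomputable def reWeight {V : Type} [DecidableEq V]
    (w : V → V → ℝ) (T : Finset V) (P : ℕ) : V → V → ℝ :=
  fun u v => if u ∈ T ∨ v ∈ T then (P : ℝ) * w u v else w u v

/-- Value of the cut `(S, Sᶜ)`: total weight of the unordered pairs crossing `S`
(each crossing unordered pair `{a,b}` is counted once, as the ordered pair with
`a ∈ S` and `b ∉ S`). -/
noncomputable def cutValue {W : Type} [Fintype W] [DecidableEq W]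
    (c : W → W → ℝ) (S : Finset W) : ℝ :=
  ∑ a ∈ S, ∑ b ∈ Sᶜ, c a b
section Aux
open scoped Classical
variable {V : Type} [Fintype V] [DecidableEq V] (T : Finset V) (P : ℕ)

noncomputable def instCopy (S : Finset (Inst V T P)) (i : Fin P) : Finset V :=
  Finset.univ.filter (fun v => if h : v ∈ T then Sum.inr (⟨v, h⟩, i) ∈ S else Sum.inl ⟨v, h⟩ ∈ S)

lemma mem_instCopy_left (S : Finset (Inst V T P)) (i : Fin P) (x : {x : V // x ∉ T}) :
    x.1 ∈ instCopy T P S i ↔ Sum.inl x ∈ S := by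
  simp [instCopy, x.2]

lemma mem_instCopy_right (S : Finset (Inst V T P)) (i : Fin P) (u : {x : V // x ∈ T}) :
    u.1 ∈ instCopy T P S i ↔ Sum.inr (u, i) ∈ S := by
  simp [instCopy, u.2]

end Aux

lemma cutValue_eq_sum {W : Type} [Fintype W] [DecidableEq W] (c : W → W → ℝ) (S : Finset W) :
    cutValue c S = ∑ a : W, ∑ b : W,
      (if a ∈ S then 1 else 0) * ((if b ∈ S then 0 else 1) * c a b) := by
  unfold cutValue
  have h : ∀ a : W, ∑ b : W, (if b ∈ S then (0:ℝ) else c a b) = ∑ b ∈ Sᶜ, c a b := by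
    intro a
    calc ∑ b : W, (if b ∈ S then (0:ℝ) else c a b)
        = ∑ b : W, if b ∈ Sᶜ then c a b else 0 := by
          apply Finset.sum_congr rfl; intro b _; by_cases hb : b ∈ S <;> simp [hb]
      _ = ∑ b ∈ Sᶜ, c a b := by rw [Finset.sum_ite_mem, Finset.univ_inter]
  calc ∑ a ∈ S, ∑ b ∈ Sᶜ, c a b
      = ∑ a : W, if a ∈ S then ∑ b ∈ Sᶜ, c a b else 0 := by
        rw [Finset.sum_ite_mem, Finset.univ_inter]
    _ = ∑ a : W, ∑ b : W, (if a ∈ S then 1 else 0) * ((if b ∈ S then 0 else 1) * c a b) := by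
        apply Finset.sum_congr rfl; intro a _
        by_cases ha : a ∈ S <;> simp [ha, ← h a]

section Aux2
variable {V : Type} [Fintype V] [DecidableEq V] (w : V → V → ℝ) (T : Finset V) (P : ℕ)

noncomputable def blockNN (S : Finset (Inst V T P)) : ℝ :=
  ∑ x : {x : V // x ∉ T}, ∑ y : {x : V // x ∉ T},
    (if Sum.inl x ∈ S then (1:ℝ) else 0) * ((if Sum.inl y ∈ S then 0 else 1) * w x.1 y.1)

noncomputable def blockG (S : Finset (Inst V T P)) (i : Fin P) : ℝ :=
  (∑ x : {x : V // x ∉ T}, ∑ v : {x : V // x ∈ T},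
    (if Sum.inl x ∈ S then (1:ℝ) else 0) * ((if Sum.inr (v, i) ∈ S then 0 else 1) * w x.1 v.1))
  + (∑ u : {x : V // x ∈ T}, ∑ y : {x : V // x ∉ T},
    (if Sum.inr (u, i) ∈ S then (1:ℝ) else 0) * ((if Sum.inl y ∈ S then 0 else 1) * w u.1 y.1))
  + (∑ u : {x : V // x ∈ T}, ∑ v : {x : V // x ∈ T},
    (if Sum.inr (u, i) ∈ S then (1:ℝ) else 0) * ((if Sum.inr (v, i) ∈ S then 0 else 1) * w u.1 v.1))

lemma inst_cut_decomp (S : Finset (Inst V T P)) :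
    cutValue (instWeight w T P) S = blockNN w T P S + ∑ i, blockG w T P S i := by
  rw [cutValue_eq_sum]
  simp only [Fintype.sum_sum_type, Fintype.sum_prod_type_right, instWeight]
  simp only [mul_ite, mul_zero, Finset.sum_ite_irrel, Finset.sum_const_zero, Finset.sum_ite_eq, Finset.mem_univ,
    if_true]
  simp only [blockNN, blockG, Finset.sum_add_distrib]
  have hswap : (∑ x : {x : V // x ∉ T}, ∑ i : Fin P, ∑ v : {x : V // x ∈ T},
      (if Sum.inl x ∈ S then (1:ℝ) else 0) * ((if Sum.inr (v, i) ∈ S then 0 else 1) * w x.1 v.1))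
      = ∑ i : Fin P, ∑ x : {x : V // x ∉ T}, ∑ v : {x : V // x ∈ T},
      (if Sum.inl x ∈ S then (1:ℝ) else 0) * ((if Sum.inr (v, i) ∈ S then 0 else 1) * w x.1 v.1) :=
    Finset.sum_comm
  rw [hswap]; ring

lemma pull_const {A B : Type} [Fintype A] [Fintype B] (c : ℝ) (p : A → ℝ) (q : B → ℝ)
    (m : A → B → ℝ) :
    ∑ a : A, ∑ b : B, p a * (q b * (c * m a b)) = c * ∑ a : A, ∑ b : B, p a * (q b * m a b) := by
  rw [Finset.mul_sum]
  apply Finset.sum_congr rfl; intro a _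
  rw [Finset.mul_sum]
  apply Finset.sum_congr rfl; intro b _
  ring

lemma coeT_eq (u : {x : V // x ∈ T}) : (u.1 ∈ T) = True := eq_true u.2
lemma coeNT_eq (x : {x : V // x ∉ T}) : (x.1 ∈ T) = False := eq_false x.2

lemma re_cut_decomp (S : Finset (Inst V T P)) (i : Fin P) :
    cutValue (reWeight w T P) (instCopy T P S i)
      = blockNN w T P S + (P : ℝ) * blockG w T P S i := by
  rw [cutValue_eq_sum]
  have hsplit : ∀ f : V → ℝ, ∑ a : V, f a
      = (∑ u : {x : V // x ∈ T}, f u.1) + ∑ x : {x : V // x ∉ T}, f x.1 :=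
    fun f => by
      rw [← Finset.sum_filter_add_sum_filter_not Finset.univ (· ∈ T) f]
      congr 1
      · exact Finset.sum_subtype _ (fun x => by simp) f
      · exact Finset.sum_subtype _ (fun x => by simp) f
  simp only [hsplit, reWeight, mem_instCopy_left, mem_instCopy_right,
    coeT_eq, coeNT_eq, true_or, or_true, false_or, or_false, or_self,
    if_true, if_false]
  simp only [Finset.sum_add_distrib]
  rw [pull_const, pull_const, pull_const]
  simp only [blockNN, blockG]
  ring

end Aux2

lemma key_identity {V : Type} [Fintype V] [DecidableEq V] (w : V → V → ℝ)
    (T : Finset V) (P : ℕ) (S : Finset (Inst V T P)) :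
    ∑ i : Fin P, cutValue (reWeight w T P) (instCopy T P S i)
      = (P : ℝ) * cutValue (instWeight w T P) S := by
  simp only [re_cut_decomp, inst_cut_decomp, Finset.sum_add_distrib, Finset.sum_const,
    Finset.card_univ, Fintype.card_fin, nsmul_eq_mul, ← Finset.mul_sum, mul_add]

lemma cutValue_nonneg {W : Type} [Fintype W] [DecidableEq W] {c : W → W → ℝ}
    (h : ∀ a b, 0 ≤ c a b) (S : Finset W) : 0 ≤ cutValue c S :=
  Finset.sum_nonneg fun a _ => Finset.sum_nonneg fun b _ => h a b

lemma instWeight_nonneg {V : Type} [Fintype V] [DecidableEq V] {w : V → V → ℝ}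
    (hnonneg : ∀ u v, 0 ≤ w u v) (T : Finset V) (P : ℕ) :
    ∀ a b : Inst V T P, 0 ≤ instWeight w T P a b := by
  rintro (x | ⟨u, i⟩) (y | ⟨v, j⟩) <;> simp only [instWeight] <;>
    first
      | exact hnonneg _ _
      | (split_ifs <;> first | exact hnonneg _ _ | exact le_rfl)

lemma reWeight_nonneg {V : Type} [Fintype V] [DecidableEq V] {w : V → V → ℝ}
    (hnonneg : ∀ u v, 0 ≤ w u v) (T : Finset V) (P : ℕ) :
    ∀ a b : V, 0 ≤ reWeight w T P a b := by
  intro a b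
  unfold reWeight
  split_ifs
  · exact mul_nonneg (Nat.cast_nonneg P) (hnonneg a b)
  · exact hnonneg a b

open scoped Classical in
noncomputable def instLift {V : Type} [Fintype V] [DecidableEq V] (T : Finset V) (P : ℕ)
    (S₀ : Finset V) : Finset (Inst V T P) :=
  Finset.univ.filter (fun a => Sum.elim (fun x => x.1 ∈ S₀) (fun p => p.1.1 ∈ S₀) a)

lemma instCopy_instLift {V : Type} [Fintype V] [DecidableEq V] (T : Finset V) (P : ℕ)
    (S₀ : Finset V) (i : Fin P) : instCopy T P (instLift T P S₀) i = S₀ := by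
  ext v
  by_cases hv : v ∈ T <;> simp [instCopy, instLift, hv]

lemma mem_instLift_inl {V : Type} [Fintype V] [DecidableEq V] (T : Finset V) (P : ℕ)
    (S₀ : Finset V) (x : {x : V // x ∉ T}) :
    Sum.inl x ∈ instLift (V := V) T P S₀ ↔ x.1 ∈ S₀ := by
  simp [instLift]

/-- the minimum `s`-`t` cut value of the `P`-fold instantiation `G_P`
equals the minimum `s`-`t` cut value of the reweighted graph `G'`. -/
theorem minCut_inst_eq_minCut_reweight
    {V : Type} [Fintype V] [DecidableEq V] (w : V → V → ℝ)
    (T : Finset V) (P : ℕ) (hT : T.Nonempty) (hP : 1 ≤ P)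
    (hsymm : ∀ u v, w u v = w v u) (hnonneg : ∀ u v, 0 ≤ w u v)
    (hdiag : ∀ v, w v v = 0)
    (s t : V) (hs : s ∉ T) (ht : t ∉ T) (hst : s ≠ t) :
    sInf {x : ℝ | ∃ S : Finset (Inst V T P),
        Sum.inl ⟨s, hs⟩ ∈ S ∧ Sum.inl ⟨t, ht⟩ ∉ S ∧ cutValue (instWeight w T P) S = x} =
    sInf {x : ℝ | ∃ S : Finset V,
        s ∈ S ∧ t ∉ S ∧ cutValue (reWeight w T P) S = x} := by
  have hPpos : (0:ℝ) < P := by exact_mod_cast hP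
  have hLbdd : BddBelow {x : ℝ | ∃ S : Finset (Inst V T P),
      Sum.inl ⟨s, hs⟩ ∈ S ∧ Sum.inl ⟨t, ht⟩ ∉ S ∧ cutValue (instWeight w T P) S = x} := by
    refine ⟨0, ?_⟩
    rintro x ⟨S, -, -, rfl⟩
    exact cutValue_nonneg (instWeight_nonneg hnonneg T P) S
  have hRbdd : BddBelow {x : ℝ | ∃ S : Finset V,
      s ∈ S ∧ t ∉ S ∧ cutValue (reWeight w T P) S = x} := by
    refine ⟨0, ?_⟩
    rintro x ⟨S, -, -, rfl⟩
    exact cutValue_nonneg (reWeight_nonneg hnonneg T P) S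
  have hLne : Set.Nonempty {x : ℝ | ∃ S : Finset (Inst V T P),
      Sum.inl ⟨s, hs⟩ ∈ S ∧ Sum.inl ⟨t, ht⟩ ∉ S ∧ cutValue (instWeight w T P) S = x} := by
    refine ⟨_, {Sum.inl ⟨s, hs⟩}, Finset.mem_singleton_self _, ?_, rfl⟩
    simp [Ne.symm hst]
  have hRne : Set.Nonempty {x : ℝ | ∃ S : Finset V,
      s ∈ S ∧ t ∉ S ∧ cutValue (reWeight w T P) S = x} := by
    refine ⟨_, {s}, Finset.mem_singleton_self _, ?_, rfl⟩
    simp [Ne.symm hst]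
  have hlift : ∀ S₀ : Finset V,
      cutValue (instWeight w T P) (instLift T P S₀) = cutValue (reWeight w T P) S₀ := by
    intro S₀
    have hk := key_identity w T P (instLift T P S₀)
    simp only [instCopy_instLift] at hk
    rw [Finset.sum_const, Finset.card_univ, Fintype.card_fin, nsmul_eq_mul] at hk
    exact (mul_left_cancel₀ (ne_of_gt hPpos) hk.symm)
  apply le_antisymm
  · refine le_csInf hRne ?_
    rintro x ⟨S₀, hsS, htS, rfl⟩
    refine csInf_le hLbdd ⟨instLift T P S₀, ?_, ?_, hlift S₀⟩
    · exact (mem_instLift_inl T P S₀ ⟨s, hs⟩).mpr hsS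
    · intro hmem; exact htS ((mem_instLift_inl T P S₀ ⟨t, ht⟩).mp hmem)
  · refine le_csInf hLne ?_
    rintro x ⟨S, hsS, htS, rfl⟩
    obtain ⟨i₀, -, hmin⟩ := Finset.exists_min_image Finset.univ
      (fun i => cutValue (reWeight w T P) (instCopy T P S i)) ⟨⟨0, hP⟩, Finset.mem_univ _⟩
    have h1 : (P:ℝ) * cutValue (reWeight w T P) (instCopy T P S i₀)
        ≤ (P:ℝ) * cutValue (instWeight w T P) S := by
      rw [← key_identity]
      calc (P:ℝ) * cutValue (reWeight w T P) (instCopy T P S i₀)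
          = ∑ _i : Fin P, cutValue (reWeight w T P) (instCopy T P S i₀) := by
            rw [Finset.sum_const, Finset.card_univ, Fintype.card_fin, nsmul_eq_mul]
        _ ≤ ∑ i : Fin P, cutValue (reWeight w T P) (instCopy T P S i) :=
          Finset.sum_le_sum fun i _ => hmin i (Finset.mem_univ i)
    have h2 := le_of_mul_le_mul_left h1 hPpos
    refine le_trans (csInf_le hRbdd ⟨instCopy T P S i₀, ?_, ?_, rfl⟩) h2
    · exact (mem_instCopy_left T P S i₀ ⟨s, hs⟩).mpr hsS
    · intro hmem; exact htS ((mem_instCopy_left T P S i₀ ⟨t, ht⟩).mp hmem)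
end

section
/- Let (V, w, T, P) be a one-template parametric graph. Suppose there exists a minimum (global) cut of the P-fold instantiation G_P that has boundary vertices of T on both of its sides. Then there exists a minimum cut S of G_P such that for every v ∈ T and all i, j ∈ Fin P, (v,i) ∈ S if and only if (v,j) ∈ S (i.e., all copies of every template vertex lie on the same side of S). -/
open Finset

/-- `S` is a minimum (global) cut of the weighted graph with weight function `c`. -/
def IsMinCut {W : Type} [Fintype W] [DecidableEq W] (c : W → W → ℝ) (S : Finset W) : Prop :=
  S ≠ ∅ ∧ S ≠ Finset.univ ∧
    ∀ S' : Finset W, S' ≠ ∅ → S' ≠ Finset.univ → cutValue c S ≤ cutValue c S'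

/-- `x` is a boundary vertex of the template `T`. -/
def Boundary {V : Type} (w : V → V → ℝ) (T : Finset V) (x : V) : Prop :=
  x ∉ T ∧ ∃ v ∈ T, 0 < w x v

open Classical in
noncomputable def ind (p : Prop) : ℝ := if p then 1 else 0

lemma ind_congr {p q : Prop} (h : p ↔ q) : ind p = ind q := by
  classical
  unfold ind
  exact if_congr h rfl rfl

lemma sum_ind {α : Type*} [Fintype α] (S : Finset α) (g : α → ℝ) :
    ∑ a, ind (a ∈ S) * g a = ∑ a ∈ S, g a := by
  classical
  have h : ∀ a, ind (a ∈ S) * g a = if a ∈ S then g a else 0 := by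
    intro a; by_cases h : a ∈ S <;> simp [ind, h]
  rw [Finset.sum_congr rfl fun a _ => h a, Finset.sum_ite_mem, Finset.univ_inter]

lemma cutValue_eq {W : Type} [Fintype W] [DecidableEq W] (c : W → W → ℝ) (S : Finset W) :
    cutValue c S = ∑ a, ∑ b, ind (a ∈ S) * (ind (b ∉ S) * c a b) := by
  unfold cutValue
  rw [← sum_ind S (fun a => ∑ b ∈ Sᶜ, c a b)]
  refine Finset.sum_congr rfl fun a _ => ?_
  rw [← sum_ind Sᶜ (c a), Finset.mul_sum]
  refine Finset.sum_congr rfl fun b _ => ?_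
  rw [ind_congr (Finset.mem_compl (s := S) (a := b))]

lemma sum_comm3' {α β γ : Type*} [Fintype α] [Fintype β] [Fintype γ] (f : α → β → γ → ℝ) :
    ∑ u, ∑ i, ∑ y, f u i y = ∑ i, ∑ u, ∑ y, f u i y := Finset.sum_comm

lemma sum_comm3 {α β γ : Type*} [Fintype α] [Fintype β] [Fintype γ] (f : α → β → γ → ℝ) :
    ∑ x, ∑ v, ∑ j, f x v j = ∑ j, ∑ x, ∑ v, f x v j := by
  calc ∑ x, ∑ v, ∑ j, f x v j = ∑ x, ∑ j, ∑ v, f x v j :=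
        Finset.sum_congr rfl fun _ _ => Finset.sum_comm
    _ = ∑ j, ∑ x, ∑ v, f x v j := Finset.sum_comm

section Main
variable {V : Type} [Fintype V] [DecidableEq V] {T : Finset V} {P : ℕ}

open Classical in
noncomputable def sideSet (A : Finset {x : V // x ∉ T})
    (D : Fin P → Finset {x : V // x ∈ T}) : Finset (Inst V T P) :=
  Finset.univ.filter (fun a => match a with
    | Sum.inl x => x ∈ A
    | Sum.inr (v, j) => v ∈ D j)

@[simp] lemma mem_side_inl {A : Finset {x : V // x ∉ T}}
    {D : Fin P → Finset {x : V // x ∈ T}} {x : {x : V // x ∉ T}} :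
    (Sum.inl x : Inst V T P) ∈ sideSet A D ↔ x ∈ A := by
  simp [sideSet]

@[simp] lemma mem_side_inr {A : Finset {x : V // x ∉ T}}
    {D : Fin P → Finset {x : V // x ∈ T}} {v : {x : V // x ∈ T}} {j : Fin P} :
    (Sum.inr (v, j) : Inst V T P) ∈ sideSet A D ↔ v ∈ D j := by
  simp [sideSet]

noncomputable def base (w : V → V → ℝ) (A : Finset {x : V // x ∉ T}) : ℝ :=
  ∑ x : {x : V // x ∉ T}, ∑ y : {x : V // x ∉ T},
    ind (x ∈ A) * (ind (y ∉ A) * w x.1 y.1)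

noncomputable def layer (w : V → V → ℝ) (A : Finset {x : V // x ∉ T})
    (X : Finset {x : V // x ∈ T}) : ℝ :=
  (∑ x : {x : V // x ∉ T}, ∑ v : {x : V // x ∈ T},
      ind (x ∈ A) * (ind (v ∉ X) * w x.1 v.1))
  + ((∑ u : {x : V // x ∈ T}, ∑ y : {x : V // x ∉ T},
      ind (u ∈ X) * (ind (y ∉ A) * w u.1 y.1))
  + (∑ u : {x : V // x ∈ T}, ∑ v : {x : V // x ∈ T},
      ind (u ∈ X) * (ind (v ∉ X) * w u.1 v.1)))

lemma cut_side (w : V → V → ℝ) (A : Finset {x : V // x ∉ T})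
    (D : Fin P → Finset {x : V // x ∈ T}) :
    cutValue (instWeight w T P) (sideSet A D) = base w A + ∑ j, layer w A (D j) := by
  rw [cutValue_eq]
  simp only [Fintype.sum_sum_type, Fintype.sum_prod_type, mem_side_inl, mem_side_inr,
    instWeight, mul_ite, mul_zero, Finset.sum_ite_eq, Finset.mem_univ, if_true,
    Finset.sum_add_distrib]
  rw [sum_comm3 (α := {x : V // x ∉ T}) (β := {x : V // x ∈ T}) (γ := Fin P),
    sum_comm3' (α := {x : V // x ∈ T}) (β := Fin P) (γ := {x : V // x ∉ T}),
    sum_comm3' (α := {x : V // x ∈ T}) (β := Fin P) (γ := {x : V // x ∈ T})]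
  simp only [base, layer, Finset.sum_add_distrib]
  ring

end Main

section Main2
variable {V : Type} [Fintype V] [DecidableEq V] {T : Finset V} {P : ℕ}

lemma cut_side_const (w : V → V → ℝ) (A : Finset {x : V // x ∉ T})
    (X : Finset {x : V // x ∈ T}) :
    cutValue (instWeight w T P) (sideSet A fun _ => X) = base w A + P * layer w A X := by
  rw [cut_side]
  simp [Finset.sum_const, Finset.card_univ, nsmul_eq_mul]

end Main2

/-- if some minimum cut of the `P`-fold instantiation `G_P` has boundary
vertices of `T` on both sides, then there is a minimum cut `S` of `G_P` in which all
copies of every template vertex lie on the same side of `S`. -/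
theorem minCut_template_cross_structure
    {V : Type} [Fintype V] [DecidableEq V] (w : V → V → ℝ)
    (T : Finset V) (P : ℕ) (hT : T.Nonempty) (hP : 1 ≤ P)
    (hsymm : ∀ u v, w u v = w v u) (hnonneg : ∀ u v, 0 ≤ w u v)
    (hdiag : ∀ v, w v v = 0)
    (hexists : ∃ C : Finset (Inst V T P), IsMinCut (instWeight w T P) C ∧
      ∃ b₁ b₂ : {x : V // x ∉ T}, Boundary w T b₁.1 ∧ Boundary w T b₂.1 ∧
        Sum.inl b₁ ∈ C ∧ Sum.inl b₂ ∉ C) :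
    ∃ S : Finset (Inst V T P), IsMinCut (instWeight w T P) S ∧
      ∀ (v : {x : V // x ∈ T}) (i j : Fin P),
        Sum.inr (v, i) ∈ S ↔ Sum.inr (v, j) ∈ S := by
  classical
  obtain ⟨C, hC, b₁, b₂, -, -, hb₁, hb₂⟩ := hexists
  set A : Finset {x : V // x ∉ T} := Finset.univ.filter (fun x => Sum.inl x ∈ C) with hA
  set D : Fin P → Finset {x : V // x ∈ T} :=
    fun j => Finset.univ.filter (fun v => Sum.inr (v, j) ∈ C) with hD
  have hCD : sideSet A D = C := by
    ext a
    rcases a with x | ⟨v, j⟩ <;> simp [hA, hD]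
  have hne : Nonempty (Fin P) := ⟨⟨0, hP⟩⟩
  have hsum : ∑ i : Fin P, cutValue (instWeight w T P) (sideSet A fun _ => D i)
      ≤ ∑ _i : Fin P, cutValue (instWeight w T P) (sideSet A D) := by
    refine le_of_eq ?_
    simp only [cut_side_const, cut_side, Finset.sum_add_distrib, Finset.sum_const,
      Finset.card_univ, Fintype.card_fin, nsmul_eq_mul, Finset.mul_sum, ← Finset.mul_sum]
    all_goals ring
  obtain ⟨i, -, hi⟩ := Finset.exists_le_of_sum_le Finset.univ_nonempty hsum
  rw [hCD] at hi
  refine ⟨sideSet A fun _ => D i, ⟨?_, ?_, ?_⟩, ?_⟩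
  · have hmem : (Sum.inl b₁ : Inst V T P) ∈ sideSet A fun _ => D i := by
      rw [mem_side_inl]; simp [hA, hb₁]
    exact Finset.ne_empty_of_mem hmem
  · intro h
    have : (Sum.inl b₂ : Inst V T P) ∈ sideSet A fun _ => D i := h.symm ▸ Finset.mem_univ _
    rw [mem_side_inl] at this
    simp [hA, hb₂] at this
  · intro S' h1 h2
    exact hi.trans (hC.2.2 S' h1 h2)
  · intro v i' j'
    simp [mem_side_inr]
end

section
/- Let V be a finite set, T ⊆ V nonempty, P ≥ 1 an integer, and E a directed edge relation on V. Suppose (V, E, T) is template-acyclic: there is no directed path in (V, E) that starts at a vertex of T, ends at a vertex of T, and visits at least one vertex of V \ T. Then in the P-fold directed instantiation, every directed path from (u, i) to (v, j) with u, v ∈ T satisfies j = i. -/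
/-- Vertex set of the `P`-fold directed instantiation of a one-template parametric graph. -/
abbrev DInst (V : Type) [DecidableEq V] (T : Finset V) (P : ℕ) : Type :=
  {x : V // x ∉ T} ⊕ ({x : V // x ∈ T} × Fin P)

/-- Edge relation of the `P`-fold directed instantiation of `(V, E, T)`: edges inside the
template only connect copies with the same index; edges between the template and the
outside are replicated for every index. -/
def instRel {V : Type} [DecidableEq V] (E : V → V → Prop) (T : Finset V) (P : ℕ) :
    DInst V T P → DInst V T P → Prop
  | Sum.inl x, Sum.inl y => E x.1 y.1
  | Sum.inl x, Sum.inr (v, _) => E x.1 v.1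
  | Sum.inr (u, _), Sum.inl y => E u.1 y.1
  | Sum.inr (u, i), Sum.inr (v, j) => i = j ∧ E u.1 v.1

/-- if `(V, E, T)` is template-acyclic — no directed path starts in `T`,
ends in `T`, and visits a vertex of `V \ T` — then in the `P`-fold directed instantiation
every directed path from a copy `(u, i)` to a copy `(v, j)` of template vertices
satisfies `j = i`. -/
theorem template_acyclic_paths_preserve_index
    {V : Type} [Fintype V] [DecidableEq V] (E : V → V → Prop)
    (T : Finset V) (P : ℕ) (hT : T.Nonempty) (hP : 1 ≤ P)
    (hacyc : ¬ ∃ u ∈ T, ∃ v ∈ T, ∃ x : V, x ∉ T ∧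
      Relation.ReflTransGen E u x ∧ Relation.ReflTransGen E x v) :
    ∀ (u v : {x : V // x ∈ T}) (i j : Fin P),
      Relation.ReflTransGen (instRel E T P) (Sum.inr (u, i)) (Sum.inr (v, j)) →
      j = i := by
  intro u v i j hpath
  suffices H : ∀ z, Relation.ReflTransGen (instRel E T P) (Sum.inr (u, i)) z →
      (∀ w : {x : V // x ∈ T}, ∀ k : Fin P, z = Sum.inr (w, k) →
        k = i ∧ Relation.ReflTransGen E u.1 w.1) ∧
      (∀ x : {x : V // x ∉ T}, z = Sum.inl x → Relation.ReflTransGen E u.1 x.1) by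
    exact ((H _ hpath).1 v j rfl).1
  intro z hz
  induction hz with
  | refl =>
      refine ⟨fun w k hk => ?_, fun x hx => by cases hx⟩
      injection hk with h; injection h with h1 h2
      exact ⟨h2.symm, by rw [h1]⟩
  | tail hab hbc ih =>
      rename_i b c
      obtain ⟨ih1, ih2⟩ := ih
      cases b with
      | inl x =>
          have hux : Relation.ReflTransGen E u.1 x.1 := ih2 x rfl
          cases c with
          | inl y =>
              refine ⟨fun w k hk => (nomatch hk), fun y' hy' => ?_⟩
              injection hy' with h; subst h; exact hux.tail hbc
          | inr wk =>
              obtain ⟨w, k⟩ := wk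
              exact absurd ⟨u.1, u.2, w.1, w.2, x.1, x.2, hux,
                Relation.ReflTransGen.single hbc⟩ hacyc
      | inr wk =>
          obtain ⟨w, k⟩ := wk
          obtain ⟨hk, huw⟩ := ih1 w k rfl
          cases c with
          | inl y =>
              refine ⟨fun w' k' hk' => (nomatch hk'), fun y' hy' => ?_⟩
              injection hy' with h; subst h; exact huw.tail hbc
          | inr w'k' =>
              obtain ⟨w', k'⟩ := w'k'
              obtain ⟨hkk', hE⟩ := hbc
              refine ⟨fun w'' k'' hk'' => ?_, fun x hx => by cases hx⟩
              injection hk'' with h; injection h with h1 h2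
              subst h2; subst h1
              exact ⟨hkk' ▸ hk, huw.tail hE⟩
end

section
/- Let (V, w, T, P) be a one-template parametric graph with s, t ∈ V \ T distinct. Then a real number F is the value of some s-t flow in the P-fold instantiation G_P if and only if F is the value of some s-t flow in the reweighted graph G'. In particular, the maximum s-t flow values of G_P and of G' coincide. -/
open Finset

/-- `f` is an `s`-`t` flow with respect to the capacity function `c`: skew-symmetric,
capacity-respecting, and conserving at every vertex other than `s` and `t`. -/
def IsFlow {W : Type} [Fintype W] (c : W → W → ℝ) (s t : W) (f : W → W → ℝ) : Prop :=
  (∀ a b, f a b = - f b a) ∧ (∀ a b, f a b ≤ c a b) ∧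
    (∀ a, a ≠ s → a ≠ t → ∑ b, f a b = 0)

/-- The value of a flow `f` with source `s`. -/
noncomputable def flowValue {W : Type} [Fintype W] (f : W → W → ℝ) (s : W) : ℝ :=
  ∑ b, f s b


namespace FlowAux13

variable {V : Type} [Fintype V] [DecidableEq V] {T : Finset V} {P : ℕ}

def pr (T : Finset V) (P : ℕ) : Inst V T P → V
  | Sum.inl x => x.1
  | Sum.inr (u, _) => u.1

lemma sum_fiber_notmem (F : Inst V T P → ℝ) {u : V} (hu : u ∉ T) :
    (∑ a : Inst V T P, if pr T P a = u then F a else 0) = F (Sum.inl ⟨u, hu⟩) := by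
  rw [Fintype.sum_eq_single (Sum.inl ⟨u, hu⟩ : Inst V T P)]
  · simp [pr]
  · rintro (x | ⟨v, i⟩) hb
    · have : ¬ (x.1 = u) := fun h => hb (by cases x; simp_all)
      simp [pr, this]
    · have : ¬ (v.1 = u) := fun h => hu (h ▸ v.2)
      simp [pr, this]

lemma sum_fiber_mem (F : Inst V T P → ℝ) {u : V} (hu : u ∈ T) :
    (∑ a : Inst V T P, if pr T P a = u then F a else 0)
      = ∑ i : Fin P, F (Sum.inr (⟨u, hu⟩, i)) := by
  rw [Fintype.sum_sum_type]
  have h1 : (∑ x : {x : V // x ∉ T},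
      if pr T P (Sum.inl x) = u then F (Sum.inl x) else 0) = 0 := by
    apply Finset.sum_eq_zero; intro x _
    have : ¬ (x.1 = u) := fun h => x.2 (h ▸ hu)
    simp [pr, this]
  rw [h1, zero_add, Fintype.sum_prod_type]
  rw [Fintype.sum_eq_single (⟨u, hu⟩ : {x : V // x ∈ T})]
  · simp [pr]
  · intro v hv
    have : ¬ (v.1 = u) := fun h => hv (Subtype.ext h)
    simp [pr, this]

lemma sum_ite_const {α : Type} [Fintype α] (p : Prop) [Decidable p] (F : α → ℝ) :
    (∑ a : α, if p then F a else 0) = if p then ∑ a : α, F a else 0 := by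
  split_ifs <;> simp

lemma sum_split (h : V → ℝ) :
    (∑ v : V, h v)
      = (∑ x : {x : V // x ∉ T}, h x.1) + (∑ x : {x : V // x ∈ T}, h x.1) := by
  classical
  have h1 : (∑ x : {x : V // x ∈ T}, h x.1) = ∑ v ∈ T, h v :=
    T.sum_coe_sort h
  have h2 : (∑ x : {x : V // x ∉ T}, h x.1) = ∑ v ∈ Tᶜ, h v :=
    (Finset.sum_subtype Tᶜ (fun x => Finset.mem_compl) h).symm
  rw [h1, h2, add_comm, Finset.sum_add_sum_compl]

end FlowAux13

noncomputable def FlowAux13.liftFlow {V : Type} [Fintype V] [DecidableEq V]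
    (T : Finset V) (P : ℕ) (g : V → V → ℝ) : Inst V T P → Inst V T P → ℝ
  | Sum.inl x, Sum.inl y => g x.1 y.1
  | Sum.inl x, Sum.inr (v, _) => g x.1 v.1 / P
  | Sum.inr (u, _), Sum.inl y => g u.1 y.1 / P
  | Sum.inr (u, i), Sum.inr (v, j) => if i = j then g u.1 v.1 / P else 0

open FlowAux13

/-- a real number `F` is the value of some `s`-`t` flow in the `P`-fold
instantiation `G_P` if and only if it is the value of some `s`-`t` flow in the reweighted
graph `G'`; in particular, the maximum `s`-`t` flow values of `G_P` and `G'` coincide. -/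
theorem flow_values_inst_eq_reweight
    {V : Type} [Fintype V] [DecidableEq V] (w : V → V → ℝ)
    (T : Finset V) (P : ℕ) (hT : T.Nonempty) (hP : 1 ≤ P)
    (hsymm : ∀ u v, w u v = w v u) (hnonneg : ∀ u v, 0 ≤ w u v)
    (hdiag : ∀ v, w v v = 0)
    (s t : V) (hs : s ∉ T) (ht : t ∉ T) (hst : s ≠ t) :
    (∀ F : ℝ,
      (∃ f, IsFlow (instWeight w T P) (Sum.inl ⟨s, hs⟩) (Sum.inl ⟨t, ht⟩) f ∧
        flowValue f (Sum.inl ⟨s, hs⟩) = F) ↔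
      (∃ f, IsFlow (reWeight w T P) s t f ∧ flowValue f s = F)) ∧
    sSup {F : ℝ | ∃ f, IsFlow (instWeight w T P) (Sum.inl ⟨s, hs⟩) (Sum.inl ⟨t, ht⟩) f ∧
        flowValue f (Sum.inl ⟨s, hs⟩) = F} =
      sSup {F : ℝ | ∃ f, IsFlow (reWeight w T P) s t f ∧ flowValue f s = F} := by
  classical
  have hPpos : (0 : ℝ) < P := by exact_mod_cast Nat.lt_of_lt_of_le Nat.zero_lt_one hP
  have hPne : (P : ℝ) ≠ 0 := ne_of_gt hPpos
  have main : ∀ F : ℝ,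
      (∃ f, IsFlow (instWeight w T P) (Sum.inl ⟨s, hs⟩) (Sum.inl ⟨t, ht⟩) f ∧
        flowValue f (Sum.inl ⟨s, hs⟩) = F) ↔
      (∃ f, IsFlow (reWeight w T P) s t f ∧ flowValue f s = F) := by
    intro F
    constructor
    · rintro ⟨f, ⟨hskew, hcap, hcons⟩, rfl⟩
      set g : V → V → ℝ := fun u v =>
        ∑ a : Inst V T P, ∑ b : Inst V T P,
          if pr T P a = u ∧ pr T P b = v then f a b else 0 with hgdef
      have hg : ∀ u v, g u v =
          ∑ a : Inst V T P, if pr T P a = u then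
            (∑ b : Inst V T P, if pr T P b = v then f a b else 0) else 0 := by
        intro u v
        rw [hgdef]
        refine Finset.sum_congr rfl fun a _ => ?_
        simp only [ite_and]
        exact sum_ite_const _ _
      have hrow : ∀ u : V, (∑ v : V, g u v)
          = ∑ a : Inst V T P, if pr T P a = u then (∑ b, f a b) else 0 := by
        intro u
        calc (∑ v : V, g u v)
            = ∑ v : V, ∑ a : Inst V T P, if pr T P a = u then
                (∑ b, if pr T P b = v then f a b else 0) else 0 :=
              Finset.sum_congr rfl fun v _ => hg u v
          _ = ∑ a : Inst V T P, ∑ v : V, if pr T P a = u then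
                (∑ b, if pr T P b = v then f a b else 0) else 0 := Finset.sum_comm
          _ = ∑ a : Inst V T P, if pr T P a = u then
                (∑ v : V, ∑ b, if pr T P b = v then f a b else 0) else 0 :=
              Finset.sum_congr rfl fun a _ => sum_ite_const _ _
          _ = ∑ a : Inst V T P, if pr T P a = u then (∑ b, f a b) else 0 := by
              refine Finset.sum_congr rfl fun a _ => ?_
              refine if_congr Iff.rfl ?_ rfl
              rw [Finset.sum_comm]
              exact Finset.sum_congr rfl fun b _ => by simp [Finset.sum_ite_eq]
      refine ⟨g, ⟨?_, ?_, ?_⟩, ?_⟩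
      · -- skew-symmetry
        intro u v
        have h1 : g v u = ∑ a : Inst V T P, ∑ b : Inst V T P,
            -(if pr T P a = u ∧ pr T P b = v then f a b else 0) := by
          rw [hgdef]
          rw [Finset.sum_comm]
          refine Finset.sum_congr rfl fun a _ => Finset.sum_congr rfl fun b _ => ?_
          by_cases h1 : pr T P a = v <;> by_cases h2 : pr T P b = u <;>
            simp [h1, h2, hskew a b]
        rw [h1]
        simp only [Finset.sum_neg_distrib, neg_neg]
        rfl
      · -- capacity
        intro u v
        by_cases hu : u ∈ T <;> by_cases hv : v ∈ T
        · have hrepr : g u v = ∑ i : Fin P, ∑ j : Fin P,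
              f (Sum.inr (⟨u, hu⟩, i)) (Sum.inr (⟨v, hv⟩, j)) := by
            rw [hg, sum_fiber_mem _ hu]
            exact Finset.sum_congr rfl fun i _ => sum_fiber_mem _ hv
          have hle : g u v ≤ (P : ℝ) * w u v := by
            rw [hrepr]
            calc (∑ i : Fin P, ∑ j : Fin P,
                  f (Sum.inr (⟨u, hu⟩, i)) (Sum.inr (⟨v, hv⟩, j)))
                ≤ ∑ i : Fin P, ∑ j : Fin P,
                  instWeight w T P (Sum.inr (⟨u, hu⟩, i)) (Sum.inr (⟨v, hv⟩, j)) :=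
                  Finset.sum_le_sum fun i _ => Finset.sum_le_sum fun j _ => hcap _ _
              _ = ∑ _i : Fin P, w u v := by
                  refine Finset.sum_congr rfl fun i _ => ?_
                  simp [instWeight, Finset.sum_ite_eq]
              _ = (P : ℝ) * w u v := by simp [mul_comm]
          simpa [reWeight, hu] using hle
        · have hrepr : g u v = ∑ i : Fin P,
              f (Sum.inr (⟨u, hu⟩, i)) (Sum.inl ⟨v, hv⟩) := by
            rw [hg, sum_fiber_mem _ hu]
            exact Finset.sum_congr rfl fun i _ => sum_fiber_notmem _ hv
          have hle : g u v ≤ (P : ℝ) * w u v := by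
            rw [hrepr]
            calc (∑ i : Fin P, f (Sum.inr (⟨u, hu⟩, i)) (Sum.inl ⟨v, hv⟩))
                ≤ ∑ _i : Fin P, w u v :=
                  Finset.sum_le_sum fun i _ => hcap _ _
              _ = (P : ℝ) * w u v := by simp [mul_comm]
          simpa [reWeight, hu] using hle
        · have hrepr : g u v = ∑ i : Fin P,
              f (Sum.inl ⟨u, hu⟩) (Sum.inr (⟨v, hv⟩, i)) := by
            rw [hg, sum_fiber_notmem _ hu, sum_fiber_mem _ hv]
          have hle : g u v ≤ (P : ℝ) * w u v := by
            rw [hrepr]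
            calc (∑ i : Fin P, f (Sum.inl ⟨u, hu⟩) (Sum.inr (⟨v, hv⟩, i)))
                ≤ ∑ _i : Fin P, w u v :=
                  Finset.sum_le_sum fun i _ => hcap _ _
              _ = (P : ℝ) * w u v := by simp [mul_comm]
          simpa [reWeight, hv] using hle
        · have hrepr : g u v = f (Sum.inl ⟨u, hu⟩) (Sum.inl ⟨v, hv⟩) := by
            rw [hg, sum_fiber_notmem _ hu, sum_fiber_notmem _ hv]
          have hle : g u v ≤ w u v := hrepr ▸ hcap _ _
          simpa [reWeight, hu, hv] using hle
      · -- conservation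
        intro u hus hut
        rw [hrow]
        apply Finset.sum_eq_zero
        intro a _
        split_ifs with h
        · refine hcons a ?_ ?_
          · rintro rfl
            simp only [pr] at h
            exact hus h.symm
          · rintro rfl
            simp only [pr] at h
            exact hut h.symm
        · rfl
      · -- value
        show flowValue g s = flowValue f (Sum.inl ⟨s, hs⟩)
        rw [flowValue, flowValue, hrow, sum_fiber_notmem _ hs]
    · rintro ⟨g, ⟨hskew, hcap, hcons⟩, rfl⟩
      have key : ∀ x : {x : V // x ∉ T},
          (∑ b, liftFlow T P g (Sum.inl x) b) = ∑ v : V, g x.1 v := by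
        intro x
        rw [Fintype.sum_sum_type, Fintype.sum_prod_type]
        simp only [liftFlow]
        have h2 : ∀ v : {x : V // x ∈ T},
            (∑ _i : Fin P, g x.1 v.1 / (P : ℝ)) = g x.1 v.1 := by
          intro v
          rw [Finset.sum_const, Finset.card_univ, Fintype.card_fin, nsmul_eq_mul]
          field_simp
        simp only [h2]
        rw [sum_split (T := T) (fun v => g x.1 v)]
      refine ⟨liftFlow T P g, ⟨?_, ?_, ?_⟩, ?_⟩
      · -- skew-symmetry
        rintro (x | ⟨u, i⟩) (y | ⟨v, j⟩)
        · simp only [liftFlow]; exact hskew _ _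
        · simp only [liftFlow]; rw [hskew, neg_div]
        · simp only [liftFlow]; rw [hskew, neg_div]
        · simp only [liftFlow]
          rcases eq_or_ne i j with rfl | h
          · simp [hskew u.1 v.1, neg_div]
          · simp [h, Ne.symm h]
      · -- capacity
        rintro (x | ⟨u, i⟩) (y | ⟨v, j⟩)
        · have := hcap x.1 y.1
          simpa [liftFlow, instWeight, reWeight, x.2, y.2] using this
        · have := hcap x.1 v.1
          rw [reWeight, if_pos (Or.inr v.2)] at this
          simp only [liftFlow, instWeight]
          rw [div_le_iff₀ hPpos]
          calc g x.1 v.1 ≤ (P : ℝ) * w x.1 v.1 := this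
            _ = w x.1 v.1 * P := mul_comm _ _
        · have := hcap u.1 y.1
          rw [reWeight, if_pos (Or.inl u.2)] at this
          simp only [liftFlow, instWeight]
          rw [div_le_iff₀ hPpos]
          calc g u.1 y.1 ≤ (P : ℝ) * w u.1 y.1 := this
            _ = w u.1 y.1 * P := mul_comm _ _
        · simp only [liftFlow, instWeight]
          split_ifs with h
          · have := hcap u.1 v.1
            rw [reWeight, if_pos (Or.inl u.2)] at this
            rw [div_le_iff₀ hPpos]
            calc g u.1 v.1 ≤ (P : ℝ) * w u.1 v.1 := this
              _ = w u.1 v.1 * P := mul_comm _ _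
          · exact le_refl 0
      · -- conservation
        rintro (x | ⟨u, i⟩) ha hb
        · rw [key x]
          refine hcons x.1 ?_ ?_
          · intro h
            exact ha (by cases x; subst h; rfl)
          · intro h
            exact hb (by cases x; subst h; rfl)
        · rw [Fintype.sum_sum_type, Fintype.sum_prod_type]
          simp only [liftFlow]
          have h3 : ∀ v : {x : V // x ∈ T},
              (∑ j : Fin P, if i = j then g u.1 v.1 / (P : ℝ) else 0)
                = g u.1 v.1 / P := by
            intro v
            simp [Finset.sum_ite_eq]
          simp only [h3]
          have h4 : (∑ v : V, g u.1 v / (P : ℝ)) = 0 := by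
            rw [← Finset.sum_div,
              hcons u.1 (fun h => hs (h ▸ u.2)) (fun h => ht (h ▸ u.2)), zero_div]
          rw [sum_split (T := T) (fun v => g u.1 v / (P : ℝ))] at h4
          exact h4
      · -- value
        show flowValue (liftFlow T P g) (Sum.inl ⟨s, hs⟩) = flowValue g s
        rw [flowValue, flowValue]
        exact key ⟨s, hs⟩
  exact ⟨main, congrArg sSup (Set.ext main)⟩
end
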